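/- Suppose the threshold satisfies C = (1−α)/2. Then x = 1/2 is a fixed point of the wealth-update map f. Moreover, if in addition (1−α)·√(γ² + σ²) > √(2π)·(αγ² + (1−α)σ²) (equivalently f'(1/2) > 1), then f has two further fixed points a and b with a < 1/2 < b, so f has three distinct fixed points. -/

import Mathlib

open Real

/-! With `C = (1 - α) / 2` the argument of `Φ` vanishes at `x = 1 / 2`, and `Φ 0 = 1 / 2` by the
symmetry of the Gaussian density, so `1 / 2` is fixed. Since `0 < f < 1`, the function
`x ↦ f x - x` is positive at `0` and negative at `1`; when `f' (1 / 2) > 1` it is negative just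
left of `1 / 2` and positive just right of it, and the intermediate value theorem gives a fixed
point on each side. -/

open MeasureTheory Set Filter Topology ProbabilityTheory

theorem setIntegral_pos_of_forall_pos {X : Type*} [MeasurableSpace X] {μ : Measure X}
    {g : X → ℝ} {s : Set X} (hg : IntegrableOn g s μ) (hpos : ∀ t, 0 < g t) (hs : μ s ≠ 0) :
    0 < ∫ t in s, g t ∂μ := by
  rw [setIntegral_pos_iff_support_of_nonneg_ae (.of_forall fun t => (hpos t).le) hg,
    Function.support_eq_univ fun t => (hpos t).ne', univ_inter]
  exact pos_iff_ne_zero.mpr hs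

section IntegralIic

variable {g : ℝ → ℝ}

theorem hasDerivAt_integral_Iic (hg : Integrable g) (hc : Continuous g) (u : ℝ) :
    HasDerivAt (fun v => ∫ t in Iic v, g t) (g u) u := by
  have hsplit :
      (fun v => ∫ t in Iic v, g t) = fun v => (∫ t in Iic 0, g t) + ∫ t in 0..v, g t := by
    funext v
    rw [← intervalIntegral.integral_Iic_sub_Iic hg.integrableOn hg.integrableOn]
    ring
  rw [hsplit]
  exact (intervalIntegral.integral_hasDerivAt_right hg.intervalIntegrable
    hc.stronglyMeasurable.stronglyMeasurableAtFilter hc.continuousAt).const_add _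

theorem integral_Iic_add_integral_Ioi (hg : Integrable g) (u : ℝ) :
    (∫ t in Iic u, g t) + ∫ t in Ioi u, g t = ∫ t, g t :=
  intervalIntegral.integral_Iic_add_Ioi hg.integrableOn hg.integrableOn

theorem integral_Iic_lt_integral (hg : Integrable g) (hpos : ∀ t, 0 < g t) (u : ℝ) :
    ∫ t in Iic u, g t < ∫ t, g t := by
  have hIoi := setIntegral_pos_of_forall_pos hg.integrableOn hpos (by simp : volume (Ioi u) ≠ 0)
  linarith [integral_Iic_add_integral_Ioi hg u]

theorem integral_Iic_zero_of_even (hg : Integrable g) (heven : ∀ t, g (-t) = g t) :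
    ∫ t in Iic 0, g t = (∫ t, g t) / 2 := by
  have hsymm : ∫ t in Iic 0, g t = ∫ t in Ioi 0, g t := by
    simpa [heven] using integral_comp_neg_Iic 0 g
  linarith [integral_Iic_add_integral_Ioi hg 0]

end IntegralIic

theorem HasDerivAt.exists_neg_left_and_pos_right {F : ℝ → ℝ} {c F' : ℝ} (hF : HasDerivAt F F' c)
    (hpos : 0 < F') (hc : F c = 0) : (∃ x < c, F x < 0) ∧ ∃ y > c, 0 < F y := by
  have hsign := eventually_nhdsWithin_sign_eq_of_deriv_pos (hF.deriv ▸ hpos) hc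
  constructor
  · obtain ⟨x, hx, hlt⟩ :=
      ((hsign.filter_mono nhdsWithin_le_nhds).and (self_mem_nhdsWithin : Iio c ∈ 𝓝[<] c)).exists
    refine ⟨x, hlt, ?_⟩
    rwa [sign_neg (sub_neg.mpr hlt), sign_eq_neg_one_iff] at hx
  · obtain ⟨y, hy, hgt⟩ :=
      ((hsign.filter_mono nhdsWithin_le_nhds).and (self_mem_nhdsWithin : Ioi c ∈ 𝓝[>] c)).exists
    refine ⟨y, hgt, ?_⟩
    rwa [sign_pos (sub_pos.mpr hgt), sign_eq_one_iff] at hy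

theorem exists_fixedPoints_lt_gt_of_one_lt_deriv {f : ℝ → ℝ} {m M c f' : ℝ} (hf : Continuous f)
    (hm : ∀ x, m < f x) (hM : ∀ x, f x < M) (hc : f c = c) (hd : HasDerivAt f f' c)
    (h1 : 1 < f') : ∃ a b, f a = a ∧ f b = b ∧ a < c ∧ c < b := by
  have hF : Continuous fun x => f x - x := hf.sub continuous_id
  have hF' : HasDerivAt (fun x => f x - x) (f' - 1) c := hd.sub (hasDerivAt_id' c)
  obtain ⟨⟨x, hxc, hx⟩, ⟨y, hyc, hy⟩⟩ :=
    hF'.exists_neg_left_and_pos_right (sub_pos.mpr h1) (sub_eq_zero.mpr hc)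
  have hmx : m ≤ x := by linarith [hm x]
  have hyM : y ≤ M := by linarith [hM y]
  obtain ⟨a, ha, hfa⟩ := intermediate_value_Icc' hmx hF.continuousOn
    ⟨hx.le, by linarith [hm m]⟩
  obtain ⟨b, hb, hfb⟩ := intermediate_value_Icc' hyM hF.continuousOn
    ⟨by linarith [hM M], hy.le⟩
  exact ⟨a, b, sub_eq_zero.mp hfa, sub_eq_zero.mp hfb, ha.2.trans_lt hxc, hyc.trans_le hb.1⟩

theorem half_fixed_point_and_three_fixed_points_general
    (γ σ C α : ℝ) (hσ : 0 < σ) (hα : α ∈ Set.Ico (0 : ℝ) 1)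
    (Φ : ℝ → ℝ)
    (hΦ : ∀ u, Φ u = ∫ t in Set.Iic u, (Real.sqrt (2 * π))⁻¹ * Real.exp (-t ^ 2 / 2))
    (K : ℝ) (hK : K = Real.sqrt (γ ^ 2 + σ ^ 2) / (α * γ ^ 2 + (1 - α) * σ ^ 2))
    (f : ℝ → ℝ) (hf : f = fun x => 1 - Φ (K * (C - (1 - α) * x)))
    (hC : C = (1 - α) / 2) :
    f (1 / 2) = 1 / 2
    ∧ ((1 - α) * Real.sqrt (γ ^ 2 + σ ^ 2)
          > Real.sqrt (2 * π) * (α * γ ^ 2 + (1 - α) * σ ^ 2) →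
        ∃ a b : ℝ, f a = a ∧ f b = b ∧ a < 1 / 2 ∧ (1 : ℝ) / 2 < b) := by
  set g := gaussianPDFReal 0 1
  have hΦg : Φ = fun u => ∫ t in Iic u, g t := by
    funext u
    simp [hΦ, g, gaussianPDFReal]
  have hg : Integrable g := integrable_gaussianPDFReal 0 1
  have hg_pos (t : ℝ) : 0 < g t := gaussianPDFReal_pos 0 1 t one_ne_zero
  have hg_one : ∫ t, g t = 1 := integral_gaussianPDFReal_eq_one 0 one_ne_zero
  have hΦ_zero : Φ 0 = 1 / 2 := by
    rw [hΦg]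
    simpa [hg_one] using integral_Iic_zero_of_even hg (by simp [g, gaussianPDFReal])
  have hΦ_pos (u : ℝ) : 0 < Φ u :=
    hΦg ▸ setIntegral_pos_of_forall_pos hg.integrableOn hg_pos (by simp)
  have hΦ_lt_one (u : ℝ) : Φ u < 1 := hΦg ▸ hg_one ▸ integral_Iic_lt_integral hg hg_pos u
  have hΦ' (u : ℝ) : HasDerivAt Φ (g u) u :=
    hΦg ▸ hasDerivAt_integral_Iic hg (by unfold g; rw [gaussianPDFReal_def]; fun_prop) u
  have hf' (x : ℝ) : HasDerivAt f ((1 - α) * K * g (K * (C - (1 - α) * x))) x := by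
    subst hf
    have hinner := (((hasDerivAt_id' x).const_mul (1 - α)).const_sub C).const_mul K
    exact (((hΦ' _).comp x hinner).const_sub 1).congr_deriv (by ring)
  have hcenter : K * (C - (1 - α) * (1 / 2)) = 0 := by rw [hC]; ring
  have hf_half : f (1 / 2) = 1 / 2 := by
    rw [hf]
    norm_num [hcenter, hΦ_zero]
  refine ⟨hf_half, fun hgt => ?_⟩
  have hslope : 1 < (1 - α) * K * g (K * (C - (1 - α) * (1 / 2))) := by
    have hD : 0 < α * γ ^ 2 + (1 - α) * σ ^ 2 := by
      linarith [mul_nonneg hα.1 (sq_nonneg γ), mul_pos (sub_pos.2 hα.2) (pow_pos hσ 2)]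
    rw [gt_iff_lt, ← one_lt_div (by positivity)] at hgt
    refine hgt.trans_eq ?_
    have hg_zero : g 0 = (√(2 * π))⁻¹ := by simp [g, gaussianPDFReal]
    rw [hcenter, hg_zero, hK]
    field_simp
  refine exists_fixedPoints_lt_gt_of_one_lt_deriv (m := 0) (M := 1)
    (continuous_iff_continuousAt.2 fun x => (hf' x).continuousAt) (fun x => ?_) (fun x => ?_)
    hf_half (hf' _) hslope
  · simpa [hf] using hΦ_lt_one _
  · simpa [hf] using hΦ_pos _

/-- if `C = (1-α)/2` then `1/2` is a fixed point of the wealth-update map `f`;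
if moreover `(1-α)√(γ²+σ²) > √(2π)(αγ²+(1-α)σ²)` (i.e. `f'(1/2) > 1`), then `f` has two
further fixed points `a < 1/2 < b`, hence three distinct fixed points. -/
theorem half_fixed_point_and_three_fixed_points
    (γ σ C α : ℝ) (hγ : 0 < γ) (hσ : 0 < σ) (hα : α ∈ Set.Ico (0 : ℝ) 1)
    (Φ : ℝ → ℝ)
    (hΦ : ∀ u, Φ u = ∫ t in Set.Iic u, (Real.sqrt (2 * π))⁻¹ * Real.exp (-t ^ 2 / 2))
    (K : ℝ) (hK : K = Real.sqrt (γ ^ 2 + σ ^ 2) / (α * γ ^ 2 + (1 - α) * σ ^ 2))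
    (f : ℝ → ℝ) (hf : f = fun x => 1 - Φ (K * (C - (1 - α) * x)))
    (hC : C = (1 - α) / 2) :
    f (1 / 2) = 1 / 2
    ∧ ((1 - α) * Real.sqrt (γ ^ 2 + σ ^ 2)
          > Real.sqrt (2 * π) * (α * γ ^ 2 + (1 - α) * σ ^ 2) →
        ∃ a b : ℝ, f a = a ∧ f b = b ∧ a < 1 / 2 ∧ (1 : ℝ) / 2 < b) :=
  half_fixed_point_and_three_fixed_points_general γ σ C α hσ hα Φ hΦ K hK f hf hC
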